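/- arXiv:2510.07111 — 2 statements merged into one kernel-verified Lean document; each statement's English description precedes it below -/
import Mathlib

section
/- Let k be a field, let n ≥ 1, and let P and H be polynomials in the variables x_0, …, x_{n-1} over k, regarded via the natural inclusion as elements of A := k[x_0,…,x_n]. Let B := A/(P·x_n + H) be the quotient ring and let p denote the image of P in B. Then the localization of B away from p is isomorphic, as a k-algebra, to the localization of k[x_0,…,x_{n-1}] away from P. -/
/-!
Write `R = k[x_0,…,x_{n-1}]`, so that `k[x_0,…,x_n] ≅ R[X]` with `x_n ↦ X`. Once `P` is inverted,
the relation `P·X + H = 0` forces `X = -H/P`, so `X ↦ -H/P` identifies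
`(R[X]/(P·X + H))[1/P]` with `R[1/P]`. The inverse is the structure map; the composite on `R[1/P]`
is the identity because `R[1/P]` admits at most one `R`-algebra map to any given algebra.
-/

open Polynomial

namespace Polynomial

variable {R : Type*} [CommRing R] (P H : R)

theorem aeval_neg_mul_invSelf_C_mul_X_add_C :
    aeval (-algebraMap R (Localization.Away P) H * IsLocalization.Away.invSelf P)
      (C P * X + C H) = 0 := by
  simp only [map_add, map_mul, aeval_C, aeval_X]
  linear_combination (-algebraMap R (Localization.Away P) H) *
    IsLocalization.Away.mul_invSelf (S := Localization.Away P) P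

noncomputable def quotientSpanCMulXAddCToAway :
    R[X] ⧸ Ideal.span {C P * X + C H} →ₐ[R] Localization.Away P :=
  Ideal.Quotient.liftₐ _ (aeval (-algebraMap R _ H * IsLocalization.Away.invSelf P))
    fun a ha => by
      obtain ⟨c, rfl⟩ := Ideal.mem_span_singleton'.mp ha
      rw [map_mul, aeval_neg_mul_invSelf_C_mul_X_add_C, mul_zero]

theorem quotientSpanCMulXAddCToAway_mk (q : R[X]) :
    quotientSpanCMulXAddCToAway P H (Ideal.Quotient.mk _ q) =
      aeval (-algebraMap R _ H * IsLocalization.Away.invSelf P) q :=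
  rfl

noncomputable def awayQuotientSpanCMulXAddCAlgEquiv :
    Localization.Away (Ideal.Quotient.mk (Ideal.span {C P * X + C H}) (C P)) ≃ₐ[R]
      Localization.Away P := by
  set I := Ideal.span {C P * X + C H}
  set B := Localization.Away (Ideal.Quotient.mk I (C P))
  have hφ : IsUnit (quotientSpanCMulXAddCToAway P H (Ideal.Quotient.mk I (C P))) := by
    rw [quotientSpanCMulXAddCToAway_mk, aeval_C]
    exact IsLocalization.Away.algebraMap_isUnit P
  have hP : IsUnit (Algebra.ofId R B P) :=
    IsLocalization.Away.algebraMap_isUnit (Ideal.Quotient.mk I (C P))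
  let Φ := IsLocalization.Away.liftAlgHom (S := B) _ hφ
  let Ψ := IsLocalization.Away.liftAlgHom (S := Localization.Away P) P hP
  refine AlgEquiv.ofAlgHom Φ Ψ
    ((IsLocalization.algHom_subsingleton (Submonoid.powers P)).elim _ _) ?_
  refine IsLocalization.algHom_ext (Submonoid.powers (Ideal.Quotient.mk I (C P)))
    (Ideal.Quotient.algHom_ext R (Polynomial.algHom_ext ?_))
  set x := algebraMap (R[X] ⧸ I) B (Ideal.Quotient.mk I X)
  change Ψ (Φ x) = x
  have hrel : algebraMap R B P * x + algebraMap R B H = 0 := by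
    rw [IsScalarTower.algebraMap_apply R (R[X] ⧸ I) B,
      IsScalarTower.algebraMap_apply R (R[X] ⧸ I) B, ← map_mul, ← map_add]
    convert map_zero (algebraMap (R[X] ⧸ I) B)
    exact Ideal.Quotient.eq_zero_iff_mem.mpr (Ideal.mem_span_singleton_self _)
  have hinv : algebraMap R B P * Ψ (IsLocalization.Away.invSelf P) = 1 := by
    rw [← Ψ.commutes, ← map_mul, IsLocalization.Away.mul_invSelf, map_one]
  have hΦx : Φ x = -algebraMap R _ H * IsLocalization.Away.invSelf P := by
    rw [IsLocalization.Away.liftAlgHom_apply, IsLocalization.Away.lift_eq]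
    exact (quotientSpanCMulXAddCToAway_mk P H X).trans (aeval_X _)
  rw [hΦx, map_mul, map_neg, AlgHom.commutes]
  linear_combination x * hinv - Ψ (IsLocalization.Away.invSelf P) * hrel

end Polynomial

namespace MvPolynomial

variable (R : Type*) [CommSemiring R] (n : ℕ)

noncomputable def finSuccLastEquiv :
    MvPolynomial (Fin (n + 1)) R ≃ₐ[R] Polynomial (MvPolynomial (Fin n) R) :=
  (renameEquiv R finSuccEquivLast).trans (optionEquivLeft R (Fin n))

theorem finSuccLastEquiv_X_last : finSuccLastEquiv R n (X (Fin.last n)) = Polynomial.X := by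
  simp [finSuccLastEquiv]

theorem finSuccLastEquiv_rename_castSucc (q : MvPolynomial (Fin n) R) :
    finSuccLastEquiv R n (rename Fin.castSucc q) = Polynomial.C q := by
  have : (finSuccLastEquiv R n).toAlgHom.comp (rename Fin.castSucc) = Polynomial.CAlgHom := by
    ext i
    simp [finSuccLastEquiv]
  exact AlgHom.congr_fun this q

end MvPolynomial

noncomputable def awayQuotientSpanSingletonCongr {k A A' : Type*} [CommRing k] [CommRing A]
    [CommRing A'] [Algebra k A] [Algebra k A'] (e : A ≃ₐ[k] A') {g a : A} {g' a' : A'}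
    (hg : e g = g') (ha : e a = a') :
    Localization.Away (Ideal.Quotient.mk (Ideal.span {g}) a) ≃ₐ[k]
      Localization.Away (Ideal.Quotient.mk (Ideal.span {g'}) a') := by
  subst hg ha
  let q := Ideal.quotientEquivAlg (Ideal.span {g}) (Ideal.span {e g}) e
    (by rw [Ideal.map_span, Set.image_singleton]; rfl)
  exact IsLocalization.algEquivOfAlgEquiv (M := Submonoid.powers (Ideal.Quotient.mk _ a))
    (T := Submonoid.powers (Ideal.Quotient.mk _ (e a))) _ _ q (Submonoid.map_powers q _)

theorem stmt1_general (k : Type*) [Field k] (n : ℕ)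
    (P H : MvPolynomial (Fin n) k) :
    Nonempty
      (Localization.Away
          ((Ideal.Quotient.mk
              (Ideal.span
                {MvPolynomial.rename (Fin.castSucc) P * MvPolynomial.X (Fin.last n)
                  + MvPolynomial.rename (Fin.castSucc) H}))
            (MvPolynomial.rename (Fin.castSucc) P))
        ≃ₐ[k] Localization.Away P) :=
  ⟨(awayQuotientSpanSingletonCongr (MvPolynomial.finSuccLastEquiv k n)
      (by simp only [map_add, map_mul, MvPolynomial.finSuccLastEquiv_rename_castSucc,
        MvPolynomial.finSuccLastEquiv_X_last])
      (MvPolynomial.finSuccLastEquiv_rename_castSucc k n P)).trans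
    ((awayQuotientSpanCMulXAddCAlgEquiv P H).restrictScalars k)⟩

/-- Let `k` be a field, `n ≥ 1`, and `P, H ∈ k[x_0,…,x_{n-1}]`,
regarded in `A = k[x_0,…,x_n]` via the coordinate inclusion. Let
`B = A/(P·x_n + H)` and let `p` be the image of `P` in `B`. Then the localization
of `B` away from `p` is isomorphic as a `k`-algebra to the localization of
`k[x_0,…,x_{n-1}]` away from `P`. -/
theorem stmt1 (k : Type*) [Field k] (n : ℕ) (hn : 1 ≤ n)
    (P H : MvPolynomial (Fin n) k) :
    Nonempty
      (Localization.Away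
          ((Ideal.Quotient.mk
              (Ideal.span
                {MvPolynomial.rename (Fin.castSucc) P * MvPolynomial.X (Fin.last n)
                  + MvPolynomial.rename (Fin.castSucc) H}))
            (MvPolynomial.rename (Fin.castSucc) P))
        ≃ₐ[k] Localization.Away P) :=
  stmt1_general k n P H
end

section
/- Let R be a commutative ring and let c, g, M, L, f, t ∈ R. In the polynomial ring R[x, y], set H := g·c + M·x + L·y and F := x·y + t·f, and in R[x] set q := x·g·c + M·x² − t·L·f. Then the localization of R[x, y]/(H, F) away from the image of x is isomorphic, as an R-algebra, to the localization of R[x]/(q) away from the image of x; the isomorphism is the identity on R and on x, and sends the class of y to −t·f·x^{-1}. -/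
/-- The ring `R[x,y]/(H, F)` where `H = g·c + M·x + L·y` and `F = x·y + t·f`
(with `x = X 0`, `y = X 1`). -/
def stmt5.B₁ (R : Type*) [CommRing R] (c g M L f t : R) : Type _ :=
  MvPolynomial (Fin 2) R ⧸
    (Ideal.span
      { MvPolynomial.C (g * c) + MvPolynomial.C M * MvPolynomial.X 0
          + MvPolynomial.C L * MvPolynomial.X 1,
        MvPolynomial.X 0 * MvPolynomial.X 1 + MvPolynomial.C (t * f) } :
      Ideal (MvPolynomial (Fin 2) R))

noncomputable instance (R : Type*) [CommRing R] (c g M L f t : R) :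
    CommRing (stmt5.B₁ R c g M L f t) :=
  inferInstanceAs (CommRing (_ ⧸ (_ : Ideal (MvPolynomial (Fin 2) R))))

noncomputable instance (R : Type*) [CommRing R] (c g M L f t : R) :
    Algebra R (stmt5.B₁ R c g M L f t) :=
  inferInstanceAs (Algebra R (_ ⧸ (_ : Ideal (MvPolynomial (Fin 2) R))))

/-- The class of `x = X 0` in `R[x,y]/(H, F)`. -/
noncomputable def stmt5.x₁ (R : Type*) [CommRing R] (c g M L f t : R) : stmt5.B₁ R c g M L f t :=
  Ideal.Quotient.mk _ (MvPolynomial.X 0)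

/-- The class of `y = X 1` in `R[x,y]/(H, F)`. -/
noncomputable def stmt5.y₁ (R : Type*) [CommRing R] (c g M L f t : R) : stmt5.B₁ R c g M L f t :=
  Ideal.Quotient.mk _ (MvPolynomial.X 1)

/-- The ring `R[x]/(q)` where `q = x·g·c + M·x² − t·L·f`. -/
def stmt5.B₂ (R : Type*) [CommRing R] (c g M L f t : R) : Type _ :=
  Polynomial R ⧸
    (Ideal.span
      { Polynomial.X * Polynomial.C (g * c) + Polynomial.C M * Polynomial.X ^ 2
          - Polynomial.C (t * L * f) } : Ideal (Polynomial R))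

noncomputable instance (R : Type*) [CommRing R] (c g M L f t : R) :
    CommRing (stmt5.B₂ R c g M L f t) :=
  inferInstanceAs (CommRing (_ ⧸ (_ : Ideal (Polynomial R))))

noncomputable instance (R : Type*) [CommRing R] (c g M L f t : R) :
    Algebra R (stmt5.B₂ R c g M L f t) :=
  inferInstanceAs (Algebra R (_ ⧸ (_ : Ideal (Polynomial R))))

/-- The class of `x` in `R[x]/(q)`. -/
noncomputable def stmt5.x₂ (R : Type*) [CommRing R] (c g M L f t : R) : stmt5.B₂ R c g M L f t :=
  Ideal.Quotient.mk _ Polynomial.X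

/-!
Where `x` is invertible, the relation `F = x·y + t·f = 0` says exactly that `y = -t·f·x⁻¹`,
so `y` can be eliminated. What remains of `H = 0` is then `q(x) = 0`, because of the identity
`x·H = q + L·F` and the invertibility of `x`; the same identity shows that `q(x) = 0` already
holds in `R[x,y]/(H, F)`. This gives algebra maps in both directions, and they are mutually
inverse because both composites fix the generators.
-/

namespace stmt5

open IsLocalization.Away

variable {R : Type*} [CommRing R] {S : Type*} [CommRing S] [Algebra R S]

section Relations

variable (c g M L f t : R)

def H (a b : S) : S := algebraMap R S (g * c) + algebraMap R S M * a + algebraMap R S L * b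

def F (a b : S) : S := a * b + algebraMap R S (t * f)

def q (a : S) : S :=
  a * algebraMap R S (g * c) + algebraMap R S M * a ^ 2 - algebraMap R S (t * L * f)

lemma mul_H_eq_q_add_mul_F (a b : S) :
    a * H c g M L a b = q c g M L f t a + algebraMap R S L * F f t a b := by
  simp only [H, F, q, map_mul]
  ring

variable {c g M L f t}

lemma H_eq_zero_of_isUnit {a b : S} (ha : IsUnit a) (hq : q c g M L f t a = 0)
    (hF : F f t a b = 0) : H c g M L a b = 0 := by
  have key := mul_H_eq_q_add_mul_F c g M L f t a b
  rw [hq, hF, mul_zero, add_zero] at key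
  exact ha.mul_right_eq_zero.mp key

lemma F_eq_zero_iff {a a' b : S} (h : a * a' = 1) :
    F f t a b = 0 ↔ b = algebraMap R S (-(t * f)) * a' := by
  rw [F, map_neg]
  constructor
  · intro hF
    linear_combination (-b) * h + a' * hF
  · rintro rfl
    linear_combination (-algebraMap R S (t * f)) * h

lemma map_q {T : Type*} [CommRing T] [Algebra R T] (φ : S →ₐ[R] T) (a : S) :
    φ (q c g M L f t a) = q c g M L f t (φ a) := by
  simp [q]

lemma map_F {T : Type*} [CommRing T] [Algebra R T] (φ : S →ₐ[R] T) (a b : S) :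
    φ (F f t a b) = F f t (φ a) (φ b) := by
  simp [F]

variable (c g M L f t)

lemma H_x₁_y₁ : H c g M L (x₁ R c g M L f t) (y₁ R c g M L f t) = 0 :=
  Ideal.Quotient.eq_zero_iff_mem.mpr (Ideal.subset_span (Set.mem_insert _ _))

lemma F_x₁_y₁ : F f t (x₁ R c g M L f t) (y₁ R c g M L f t) = 0 :=
  Ideal.Quotient.eq_zero_iff_mem.mpr (Ideal.subset_span (Set.mem_insert_of_mem _ rfl))

lemma q_x₁ : q c g M L f t (x₁ R c g M L f t) = 0 := by
  simpa [H_x₁_y₁, F_x₁_y₁] using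
    (mul_H_eq_q_add_mul_F c g M L f t (x₁ R c g M L f t) (y₁ R c g M L f t)).symm

lemma q_x₂ : q c g M L f t (x₂ R c g M L f t) = 0 :=
  Ideal.Quotient.eq_zero_iff_mem.mpr (Ideal.subset_span rfl)

end Relations

section UniversalProperties

variable {c g M L f t : R}

noncomputable def B₁.lift (a b : S) (hH : H c g M L a b = 0) (hF : F f t a b = 0) :
    B₁ R c g M L f t →ₐ[R] S :=
  Ideal.Quotient.liftₐ _ (MvPolynomial.aeval ![a, b]) <| by
    change Ideal.span _ ≤ RingHom.ker _
    simp only [Ideal.span_le, Set.insert_subset_iff, Set.singleton_subset_iff, SetLike.mem_coe,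
      RingHom.mem_ker]
    exact ⟨by simpa [H] using hH, by simpa [F] using hF⟩

section
variable (a b : S) (hH : H c g M L a b = 0) (hF : F f t a b = 0)

@[simp]
lemma B₁.lift_x₁ : B₁.lift a b hH hF (x₁ R c g M L f t) = a :=
  (Ideal.Quotient.lift_mk _ _ _).trans (MvPolynomial.aeval_X _ _)

@[simp]
lemma B₁.lift_y₁ : B₁.lift a b hH hF (y₁ R c g M L f t) = b :=
  (Ideal.Quotient.lift_mk _ _ _).trans (MvPolynomial.aeval_X _ _)

end

lemma B₁.algHom_ext {φ ψ : B₁ R c g M L f t →ₐ[R] S}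
    (hx : φ (x₁ R c g M L f t) = ψ (x₁ R c g M L f t))
    (hy : φ (y₁ R c g M L f t) = ψ (y₁ R c g M L f t)) : φ = ψ :=
  Ideal.Quotient.algHom_ext R <| MvPolynomial.algHom_ext <| Fin.forall_fin_two.mpr ⟨hx, hy⟩

noncomputable def B₂.lift (a : S) (hq : q c g M L f t a = 0) : B₂ R c g M L f t →ₐ[R] S :=
  Ideal.Quotient.liftₐ _ (Polynomial.aeval a) <| by
    change Ideal.span _ ≤ RingHom.ker _
    simp only [Ideal.span_le, Set.singleton_subset_iff, SetLike.mem_coe, RingHom.mem_ker]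
    simpa [q] using hq

@[simp]
lemma B₂.lift_x₂ (a : S) (hq : q c g M L f t a = 0) : B₂.lift a hq (x₂ R c g M L f t) = a :=
  (Ideal.Quotient.lift_mk _ _ _).trans (Polynomial.aeval_X _)

lemma B₂.algHom_ext {φ ψ : B₂ R c g M L f t →ₐ[R] S}
    (hx : φ (x₂ R c g M L f t) = ψ (x₂ R c g M L f t)) : φ = ψ :=
  Ideal.Quotient.algHom_ext R <| Polynomial.algHom_ext hx

end UniversalProperties

section Localizations

variable (R) (c g M L f t : R)

local notation "A₁" => Localization.Away (x₁ R c g M L f t)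
local notation "A₂" => Localization.Away (x₂ R c g M L f t)

noncomputable def B₁ToAway₂ : B₁ R c g M L f t →ₐ[R] A₂ :=
  have hF : F f t (algebraMap _ A₂ (x₂ R c g M L f t))
      (algebraMap R A₂ (-(t * f)) * invSelf (x₂ R c g M L f t)) = 0 :=
    (F_eq_zero_iff (mul_invSelf _)).mpr rfl
  have hq : q c g M L f t (algebraMap _ A₂ (x₂ R c g M L f t)) = 0 := by
    rw [← IsScalarTower.coe_toAlgHom' R, ← map_q, q_x₂, map_zero]
  B₁.lift _ _ (H_eq_zero_of_isUnit (algebraMap_isUnit _) hq hF) hF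

noncomputable def B₂ToAway₁ : B₂ R c g M L f t →ₐ[R] A₁ :=
  B₂.lift (algebraMap _ A₁ (x₁ R c g M L f t)) <| by
    rw [← IsScalarTower.coe_toAlgHom' R, ← map_q, q_x₁, map_zero]

@[simp]
lemma B₁ToAway₂_x₁ :
    B₁ToAway₂ R c g M L f t (x₁ R c g M L f t) = algebraMap _ A₂ (x₂ R c g M L f t) := by
  simp [B₁ToAway₂]

@[simp]
lemma B₁ToAway₂_y₁ : B₁ToAway₂ R c g M L f t (y₁ R c g M L f t) =
    algebraMap R A₂ (-(t * f)) * invSelf (x₂ R c g M L f t) := by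
  simp [B₁ToAway₂]

@[simp]
lemma B₂ToAway₁_x₂ :
    B₂ToAway₁ R c g M L f t (x₂ R c g M L f t) = algebraMap _ A₁ (x₁ R c g M L f t) := by
  simp [B₂ToAway₁]

noncomputable def away₁ToAway₂ : A₁ →ₐ[R] A₂ :=
  liftAlgHom (x₁ R c g M L f t) (f := B₁ToAway₂ R c g M L f t) (by simp [algebraMap_isUnit])

noncomputable def away₂ToAway₁ : A₂ →ₐ[R] A₁ :=
  liftAlgHom (x₂ R c g M L f t) (f := B₂ToAway₁ R c g M L f t) (by simp [algebraMap_isUnit])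

@[simp]
lemma away₁ToAway₂_algebraMap (b : B₁ R c g M L f t) :
    away₁ToAway₂ R c g M L f t (algebraMap _ A₁ b) = B₁ToAway₂ R c g M L f t b := by
  simp [away₁ToAway₂]

@[simp]
lemma away₂ToAway₁_algebraMap (b : B₂ R c g M L f t) :
    away₂ToAway₁ R c g M L f t (algebraMap _ A₂ b) = B₂ToAway₁ R c g M L f t b := by
  simp [away₂ToAway₁]

lemma away₂ToAway₁_away₁ToAway₂_y₁ :
    away₂ToAway₁ R c g M L f t
        (away₁ToAway₂ R c g M L f t (algebraMap _ A₁ (y₁ R c g M L f t))) =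
      algebraMap _ A₁ (y₁ R c g M L f t) := by
  have hinv : algebraMap _ A₁ (x₁ R c g M L f t) *
      away₂ToAway₁ R c g M L f t (invSelf (x₂ R c g M L f t)) = 1 := by
    have := congr(away₂ToAway₁ R c g M L f t $(mul_invSelf (S := A₂) (x₂ R c g M L f t)))
    rwa [map_mul, map_one, away₂ToAway₁_algebraMap, B₂ToAway₁_x₂] at this
  have hF : F f t (algebraMap _ A₁ (x₁ R c g M L f t))
      (algebraMap _ A₁ (y₁ R c g M L f t)) = 0 := by
    rw [← IsScalarTower.coe_toAlgHom' R, ← map_F, F_x₁_y₁, map_zero]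
  rw [away₁ToAway₂_algebraMap, B₁ToAway₂_y₁, map_mul, AlgHom.commutes]
  exact ((F_eq_zero_iff hinv).mp hF).symm

noncomputable def awayEquiv : A₁ ≃ₐ[R] A₂ :=
  AlgEquiv.ofAlgHom (away₁ToAway₂ R c g M L f t) (away₂ToAway₁ R c g M L f t)
    (IsLocalization.algHom_ext (Submonoid.powers (x₂ R c g M L f t)) <| B₂.algHom_ext <| by
      simp [Algebra.algHom])
    (IsLocalization.algHom_ext (Submonoid.powers (x₁ R c g M L f t)) <| B₁.algHom_ext
      (by simp [Algebra.algHom]) (away₂ToAway₁_away₁ToAway₂_y₁ R c g M L f t))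

lemma awayEquiv_algebraMap_x₁ :
    awayEquiv R c g M L f t (algebraMap _ A₁ (x₁ R c g M L f t)) =
      algebraMap _ A₂ (x₂ R c g M L f t) := by
  simp [awayEquiv]

lemma awayEquiv_algebraMap_y₁ :
    awayEquiv R c g M L f t (algebraMap _ A₁ (y₁ R c g M L f t)) =
      algebraMap (B₂ R c g M L f t) A₂ (algebraMap R _ (-(t * f))) *
        invSelf (x₂ R c g M L f t) := by
  simp [awayEquiv, ← IsScalarTower.algebraMap_apply]

end Localizations

end stmt5

/-- Let `R` be a commutative ring and `c, g, M, L, f, t ∈ R`.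
With `H = g·c + M·x + L·y`, `F = x·y + t·f` in `R[x,y]` and
`q = x·g·c + M·x² − t·L·f` in `R[x]`, the localization of `R[x,y]/(H,F)` away
from the image of `x` is isomorphic as an `R`-algebra to the localization of
`R[x]/(q)` away from the image of `x`; the isomorphism is the identity on `R`
(it is an `R`-algebra map) and on `x`, and sends the class of `y` to
`−t·f·x⁻¹`. -/
theorem stmt5 (R : Type*) [CommRing R] (c g M L f t : R) :
    ∃ e : Localization.Away (stmt5.x₁ R c g M L f t)
        ≃ₐ[R] Localization.Away (stmt5.x₂ R c g M L f t),
      e (algebraMap _ _ (stmt5.x₁ R c g M L f t))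
          = algebraMap _ _ (stmt5.x₂ R c g M L f t) ∧
      e (algebraMap _ _ (stmt5.y₁ R c g M L f t))
          = algebraMap (stmt5.B₂ R c g M L f t) _ (algebraMap R _ (-(t * f)))
            * IsLocalization.Away.invSelf (S := Localization.Away (stmt5.x₂ R c g M L f t))
                (stmt5.x₂ R c g M L f t) := by
  open stmt5 in
  exact ⟨awayEquiv R c g M L f t, awayEquiv_algebraMap_x₁ .., awayEquiv_algebraMap_y₁ ..⟩
end
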